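/- For finitely-supported discrete random variables X_1,...,X_n with n ≥ 3, the O-information decomposes as Ω(X) = RSI(X^{n-1}; X_n) + Σ_{j=2}^{n-2} RSI(X^j; X_{j+1} | X_{j+2}^n), where conditional RSI is defined by conditioning all mutual informations on X_{j+2}^n. -/
import Mathlib


open Classical Finset Real

namespace HOI

/-- Distribution (pmf) of a random variable `X` on a finite sample space with mass `p`. -/
noncomputable def pdist {Ω α : Type} [Fintype Ω] (p : Ω → ℝ) (X : Ω → α) (a : α) : ℝ :=
  ∑ ω, if X ω = a then p ω else 0

/-- Shannon entropy of a finitely-supported discrete random variable. -/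
noncomputable def ent {Ω α : Type} [Fintype Ω] [Fintype α] (p : Ω → ℝ) (X : Ω → α) : ℝ :=
  ∑ a, Real.negMulLog (pdist p X a)

/-- Conditional entropy H(X|Y) = H(X,Y) - H(Y). -/
noncomputable def cent {Ω α β : Type} [Fintype Ω] [Fintype α] [Fintype β]
    (p : Ω → ℝ) (X : Ω → α) (Y : Ω → β) : ℝ :=
  ent p (fun ω => (X ω, Y ω)) - ent p Y

/-- Mutual information I(X;Y). -/
noncomputable def mi {Ω α β : Type} [Fintype Ω] [Fintype α] [Fintype β]
    (p : Ω → ℝ) (X : Ω → α) (Y : Ω → β) : ℝ :=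
  ent p X + ent p Y - ent p (fun ω => (X ω, Y ω))

/-- Conditional mutual information I(X;Y|Z). -/
noncomputable def cmi {Ω α β γ : Type} [Fintype Ω] [Fintype α] [Fintype β] [Fintype γ]
    (p : Ω → ℝ) (X : Ω → α) (Y : Ω → β) (Z : Ω → γ) : ℝ :=
  cent p X Z + cent p Y Z - cent p (fun ω => (X ω, Y ω)) Z

/-- Interaction information II(X;Y;Z) = I(X;Y) - I(X;Y|Z). -/
noncomputable def ii {Ω α β γ : Type} [Fintype Ω] [Fintype α] [Fintype β] [Fintype γ]
    (p : Ω → ℝ) (X : Ω → α) (Y : Ω → β) (Z : Ω → γ) : ℝ :=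
  mi p X Y - cmi p X Y Z

/-- Sub-vector of components of `X` with indices in `s`. -/
def subvec {Ω : Type} {n : ℕ} {α : Fin n → Type} (X : ∀ i, Ω → α i) (s : Finset (Fin n)) :
    Ω → ((i : {j // j ∈ s}) → α i.1) :=
  fun ω i => X i.1 ω

/-- The full random vector. -/
def fullvec {Ω : Type} {n : ℕ} {α : Fin n → Type} (X : ∀ i, Ω → α i) : Ω → (∀ i, α i) :=
  fun ω i => X i ω

/-- Joint entropy of the components of `X` with indices in `s`. -/
noncomputable def vecH {Ω : Type} [Fintype Ω] {n : ℕ} {α : Fin n → Type} [∀ i, Fintype (α i)]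
    (p : Ω → ℝ) (X : ∀ i, Ω → α i) (s : Finset (Fin n)) : ℝ :=
  ent p (subvec X s)

/-- Total correlation. -/
noncomputable def TC {Ω : Type} [Fintype Ω] {n : ℕ} {α : Fin n → Type} [∀ i, Fintype (α i)]
    (p : Ω → ℝ) (X : ∀ i, Ω → α i) : ℝ :=
  (∑ j, ent p (X j)) - ent p (fullvec X)

/-- Dual total correlation. -/
noncomputable def DTC {Ω : Type} [Fintype Ω] {n : ℕ} {α : Fin n → Type} [∀ i, Fintype (α i)]
    (p : Ω → ℝ) (X : ∀ i, Ω → α i) : ℝ :=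
  ent p (fullvec X) - ∑ j, (ent p (fullvec X) - vecH p X (Finset.univ \ {j}))

/-- O-information. -/
noncomputable def Oinfo {Ω : Type} [Fintype Ω] {n : ℕ} {α : Fin n → Type} [∀ i, Fintype (α i)]
    (p : Ω → ℝ) (X : ∀ i, Ω → α i) : ℝ :=
  ((n : ℝ) - 2) * ent p (fullvec X) + ∑ j, (ent p (X j) - vecH p X (Finset.univ \ {j}))

/-- Redundancy-synergy index. -/
noncomputable def RSI {Ω β : Type} [Fintype Ω] [Fintype β] {n : ℕ} {α : Fin n → Type}
    [∀ i, Fintype (α i)] (p : Ω → ℝ) (X : ∀ i, Ω → α i) (Y : Ω → β) : ℝ :=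
  (∑ j, mi p (X j) Y) - mi p (fullvec X) Y


 

lemma ent_eq_sum_image {Ω α : Type} [Fintype Ω] [Fintype α] (p : Ω → ℝ) (X : Ω → α) :
    ent p X = ∑ a ∈ Finset.image X Finset.univ, Real.negMulLog (pdist p X a) := by
  rw [ent, ← Finset.sum_subset (Finset.subset_univ (Finset.image X Finset.univ))]
  intro a _ ha
  have : pdist p X a = 0 := by
    rw [pdist]
    apply Finset.sum_eq_zero
    intro ω _
    have : X ω ≠ a := fun h => ha (Finset.mem_image.mpr ⟨ω, Finset.mem_univ ω, h⟩)
    simp [this]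
  simp [this]

lemma ent_congr {Ω α β : Type} [Fintype Ω] [Fintype α] [Fintype β] (p : Ω → ℝ)
    (X : Ω → α) (Y : Ω → β) (h : ∀ ω ω', X ω = X ω' ↔ Y ω = Y ω') :
    ent p X = ent p Y := by
  rw [ent_eq_sum_image, ent_eq_sum_image]
  have hpd : ∀ ω, pdist p X (X ω) = pdist p Y (Y ω) := by
    intro ω
    rw [pdist, pdist]
    apply Finset.sum_congr rfl
    intro ω' _
    by_cases hc : X ω' = X ω
    · rw [if_pos hc, if_pos ((h ω' ω).mp hc)]
    · rw [if_neg hc, if_neg (fun hc' => hc ((h ω' ω).mpr hc'))]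
  apply Finset.sum_bij (i := fun a ha => Y (Finset.mem_image.mp ha).choose)
  · intro a ha
    exact Finset.mem_image.mpr ⟨_, Finset.mem_univ _, rfl⟩
  · intro a₁ h₁ a₂ h₂ he
    have s₁ := (Finset.mem_image.mp h₁).choose_spec.2
    have s₂ := (Finset.mem_image.mp h₂).choose_spec.2
    rw [← s₁, ← s₂]
    exact (h _ _).mpr he
  · intro b hb
    obtain ⟨ω, -, rfl⟩ := Finset.mem_image.mp hb
    refine ⟨X ω, Finset.mem_image.mpr ⟨ω, Finset.mem_univ ω, rfl⟩, ?_⟩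
    have s := (Finset.mem_image.mp (Finset.mem_image.mpr ⟨ω, Finset.mem_univ ω, rfl⟩ : X ω ∈ Finset.image X Finset.univ)).choose_spec.2
    exact ((h _ _).mp s)
  · intro a ha
    have s := (Finset.mem_image.mp ha).choose_spec.2
    have h2 := hpd (Finset.mem_image.mp ha).choose
    rw [s] at h2
    rw [h2]

lemma subvec_eq_iff {Ω : Type} {n : ℕ} {α : Fin n → Type} (X : ∀ i, Ω → α i)
    (s : Finset (Fin n)) (ω ω' : Ω) :
    subvec X s ω = subvec X s ω' ↔ ∀ i ∈ s, X i ω = X i ω' := by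
  simp only [subvec, funext_iff, Subtype.forall]

lemma ent_eq_vecH {Ω : Type} [Fintype Ω] {n : ℕ} {α : Fin n → Type} [∀ i, Fintype (α i)]
    {β : Type} [Fintype β] (p : Ω → ℝ) (X : ∀ i, Ω → α i) (Y : Ω → β) (s : Finset (Fin n))
    (h : ∀ ω ω', Y ω = Y ω' ↔ ∀ i ∈ s, X i ω = X i ω') :
    ent p Y = vecH p X s := by
  apply ent_congr
  intro ω ω'
  rw [h, subvec_eq_iff]

lemma vecH_empty {Ω : Type} [Fintype Ω] {n : ℕ} {α : Fin n → Type} [∀ i, Fintype (α i)]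
    (p : Ω → ℝ) (hp1 : ∑ ω, p ω = 1) (X : ∀ i, Ω → α i) :
    vecH p X (∅ : Finset (Fin n)) = 0 := by
  have hpd : ∀ a, pdist p (subvec X (∅ : Finset (Fin n))) a = 1 := by
    intro a
    have : ∀ ω, subvec X (∅ : Finset (Fin n)) ω = a := by
      intro ω; funext i; exact absurd i.2 (Finset.notMem_empty _)
    rw [pdist]
    simp [this, hp1]
  rw [vecH, ent]
  simp [hpd]

lemma mi_eq_vecH {Ω : Type} [Fintype Ω] {n : ℕ} {α : Fin n → Type} [∀ i, Fintype (α i)]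
    (p : Ω → ℝ) (X : ∀ i, Ω → α i) (i j : Fin n) :
    mi p (X i) (X j) = vecH p X {i} + vecH p X {j} - vecH p X (insert i {j}) := by
  rw [mi]
  rw [ent_eq_vecH p X (X i) {i} (by intro ω ω'; simp),
      ent_eq_vecH p X (X j) {j} (by intro ω ω'; simp),
      ent_eq_vecH p X _ (insert i {j}) (by intro ω ω'; simp [Prod.ext_iff])]

lemma mi_sub_eq_vecH {Ω : Type} [Fintype Ω] {n : ℕ} {α : Fin n → Type} [∀ i, Fintype (α i)]
    (p : Ω → ℝ) (X : ∀ i, Ω → α i) (s : Finset (Fin n)) (j : Fin n) :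
    mi p (subvec X s) (X j) = vecH p X s + vecH p X {j} - vecH p X (insert j s) := by
  rw [mi]
  rw [ent_eq_vecH p X (X j) {j} (by intro ω ω'; simp)]
  rw [show ent p (subvec X s) = vecH p X s from rfl]
  rw [ent_eq_vecH p X _ (insert j s) (by
    intro ω ω'
    simp only [Prod.ext_iff, subvec_eq_iff, Finset.mem_insert]
    constructor
    · rintro ⟨h1, h2⟩ i (rfl | hi)
      · exact h2
      · exact h1 i hi
    · intro h
      exact ⟨fun i hi => h i (Or.inr hi), h j (Or.inl rfl)⟩)]

lemma cmi_eq_vecH {Ω : Type} [Fintype Ω] {n : ℕ} {α : Fin n → Type} [∀ i, Fintype (α i)]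
    (p : Ω → ℝ) (X : ∀ i, Ω → α i) (i j : Fin n) (t : Finset (Fin n)) :
    cmi p (X i) (X j) (subvec X t) =
      vecH p X (insert i t) + vecH p X (insert j t)
        - vecH p X (insert i (insert j t)) - vecH p X t := by
  rw [cmi, cent, cent, cent]
  rw [show ent p (subvec X t) = vecH p X t from rfl]
  rw [ent_eq_vecH p X (fun ω => (X i ω, subvec X t ω)) (insert i t) (by
    intro ω ω'
    simp only [Prod.ext_iff, subvec_eq_iff, Finset.mem_insert]
    constructor
    · rintro ⟨h1, h2⟩ k (rfl | hk)
      · exact h1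
      · exact h2 k hk
    · intro h; exact ⟨h i (Or.inl rfl), fun k hk => h k (Or.inr hk)⟩)]
  rw [ent_eq_vecH p X (fun ω => (X j ω, subvec X t ω)) (insert j t) (by
    intro ω ω'
    simp only [Prod.ext_iff, subvec_eq_iff, Finset.mem_insert]
    constructor
    · rintro ⟨h1, h2⟩ k (rfl | hk)
      · exact h1
      · exact h2 k hk
    · intro h; exact ⟨h j (Or.inl rfl), fun k hk => h k (Or.inr hk)⟩)]
  rw [ent_eq_vecH p X (fun ω => ((X i ω, X j ω), subvec X t ω)) (insert i (insert j t)) (by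
    intro ω ω'
    simp only [Prod.ext_iff, subvec_eq_iff, Finset.mem_insert]
    constructor
    · rintro ⟨⟨h1, h2⟩, h3⟩ k (rfl | rfl | hk)
      · exact h1
      · exact h2
      · exact h3 k hk
    · intro h
      exact ⟨⟨h i (Or.inl rfl), h j (Or.inr (Or.inl rfl))⟩, fun k hk => h k (Or.inr (Or.inr hk))⟩)]
  ring

lemma cmi_sub_eq_vecH {Ω : Type} [Fintype Ω] {n : ℕ} {α : Fin n → Type} [∀ i, Fintype (α i)]
    (p : Ω → ℝ) (X : ∀ i, Ω → α i) (s : Finset (Fin n)) (j : Fin n) (t : Finset (Fin n)) :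
    cmi p (subvec X s) (X j) (subvec X t) =
      vecH p X (s ∪ t) + vecH p X (insert j t)
        - vecH p X (insert j (s ∪ t)) - vecH p X t := by
  rw [cmi, cent, cent, cent]
  rw [show ent p (subvec X t) = vecH p X t from rfl]
  rw [ent_eq_vecH p X (fun ω => (subvec X s ω, subvec X t ω)) (s ∪ t) (by
    intro ω ω'
    simp only [Prod.ext_iff, subvec_eq_iff, Finset.mem_union]
    constructor
    · rintro ⟨h1, h2⟩ k (hk | hk)
      · exact h1 k hk
      · exact h2 k hk
    · intro h; exact ⟨fun k hk => h k (Or.inl hk), fun k hk => h k (Or.inr hk)⟩)]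
  rw [ent_eq_vecH p X (fun ω => (X j ω, subvec X t ω)) (insert j t) (by
    intro ω ω'
    simp only [Prod.ext_iff, subvec_eq_iff, Finset.mem_insert]
    constructor
    · rintro ⟨h1, h2⟩ k (rfl | hk)
      · exact h1
      · exact h2 k hk
    · intro h; exact ⟨h j (Or.inl rfl), fun k hk => h k (Or.inr hk)⟩)]
  rw [ent_eq_vecH p X (fun ω => ((subvec X s ω, X j ω), subvec X t ω)) (insert j (s ∪ t)) (by
    intro ω ω'
    simp only [Prod.ext_iff, subvec_eq_iff, Finset.mem_insert, Finset.mem_union]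
    constructor
    · rintro ⟨⟨h1, h2⟩, h3⟩ k (rfl | hk | hk)
      · exact h2
      · exact h1 k hk
      · exact h3 k hk
    · intro h
      exact ⟨⟨fun k hk => h k (Or.inr (Or.inl hk)), h j (Or.inl rfl)⟩,
        fun k hk => h k (Or.inr (Or.inr hk))⟩)]
  ring

lemma ent_single_eq_vecH {Ω : Type} [Fintype Ω] {n : ℕ} {α : Fin n → Type} [∀ i, Fintype (α i)]
    (p : Ω → ℝ) (X : ∀ i, Ω → α i) (j : Fin n) :
    ent p (X j) = vecH p X {j} :=
  ent_eq_vecH p X (X j) {j} (by intro ω ω'; simp)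

lemma ent_full_eq_vecH {Ω : Type} [Fintype Ω] {n : ℕ} {α : Fin n → Type} [∀ i, Fintype (α i)]
    (p : Ω → ℝ) (X : ∀ i, Ω → α i) :
    ent p (fullvec X) = vecH p X Finset.univ :=
  ent_eq_vecH p X (fullvec X) Finset.univ (by
    intro ω ω'
    simp only [fullvec, funext_iff]
    constructor
    · intro h i _; exact h i
    · intro h i; exact h i (Finset.mem_univ i))



lemma key' : ∀ n : ℕ, 3 ≤ n → ∀ H : Finset ℕ → ℝ, H ∅ = 0 →
    ((n : ℝ) - 2) * H (range n) + ∑ j ∈ range n, (H {j} - H (range n \ {j}))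
    = ((∑ i ∈ range (n - 1), (H {i} + H {n - 1} - H (insert i {n - 1})))
        - (H (range (n - 1)) + H {n - 1} - H (range n)))
    + ∑ j ∈ Finset.Ico 2 (n - 1),
        ((∑ i ∈ range j, (H (insert i (Finset.Ico (j + 1) n)) + H (Finset.Ico j n)
            - H (insert i (Finset.Ico j n)) - H (Finset.Ico (j + 1) n)))
          - (H (range n \ {j}) + H (Finset.Ico j n) - H (range n) - H (Finset.Ico (j + 1) n))) := by
  intro n hn
  induction n, hn using Nat.le_induction with
  | base =>
    intro H h0
    have e1 : range 3 \ {0} = insert 1 {2} := by decide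
    have e2 : range 3 \ {1} = insert 0 {2} := by decide
    have e3 : range 3 \ {2} = range 2 := by decide
    norm_num [Finset.sum_range_succ, e1, e2, e3]
    ring
  | succ n hn IH =>
    intro H h0
    set H' : Finset ℕ → ℝ := fun S => H (insert n S) - H {n} with hH'
    have h0' : H' ∅ = 0 := by simp [hH']
    have IH' := IH H' h0'
    have hs1 : n + 1 - 1 = n := by omega
    rw [hs1]
    have ins_range : insert n (range n) = range (n + 1) := by
      ext k; simp [Finset.mem_insert, Finset.mem_range]; omega
    have sd_top : range (n + 1) \ {n} = range n := by
      ext k; simp [Finset.mem_sdiff, Finset.mem_range]; omega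
    have ins_sd : ∀ j, j < n → insert n (range n \ {j}) = range (n + 1) \ {j} := by
      intro j hj; ext k
      simp [Finset.mem_insert, Finset.mem_sdiff, Finset.mem_range]; omega
    have EL : ((n : ℝ) + 1 - 2) * H (range (n + 1))
          + ∑ j ∈ range (n + 1), (H {j} - H (range (n + 1) \ {j}))
        = ((∑ i ∈ range n, (H {i} + H {n} - H (insert i {n})))
            - (H (range n) + H {n} - H (range (n + 1))))
          + (((n : ℝ) - 2) * H' (range n) + ∑ j ∈ range n, (H' {j} - H' (range n \ {j}))) := by
      have l1 : ∀ j ∈ range n, H' {j} - H' (range n \ {j})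
          = H (insert j {n}) - H (range (n + 1) \ {j}) := by
        intro j hj
        rw [Finset.mem_range] at hj
        rw [hH']
        simp only
        rw [ins_sd j hj, Finset.pair_comm n j]
        ring
      rw [Finset.sum_range_succ, sd_top, Finset.sum_congr rfl l1]
      rw [hH']; simp only [ins_range]
      simp only [Finset.sum_add_distrib, Finset.sum_sub_distrib, Finset.sum_const,
        Finset.card_range, nsmul_eq_mul]
      ring
    push_cast
    rw [EL, IH']
    congr 1
    have hico : Finset.Ico 2 n = insert (n - 1) (Finset.Ico 2 (n - 1)) := by
      ext k; simp [Finset.mem_Ico, Finset.mem_insert]; omega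
    have hnotmem : (n - 1) ∉ Finset.Ico 2 (n - 1) := by simp
    rw [hico, Finset.sum_insert hnotmem]
    have claim1 : (∑ i ∈ range (n - 1),
          (H (insert i (Finset.Ico (n - 1 + 1) (n + 1))) + H (Finset.Ico (n - 1) (n + 1))
            - H (insert i (Finset.Ico (n - 1) (n + 1))) - H (Finset.Ico (n - 1 + 1) (n + 1))))
          - (H (range (n + 1) \ {n - 1}) + H (Finset.Ico (n - 1) (n + 1))
            - H (range (n + 1)) - H (Finset.Ico (n - 1 + 1) (n + 1)))
        = (∑ i ∈ range (n - 1), (H' {i} + H' {n - 1} - H' (insert i {n - 1})))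
            - (H' (range (n - 1)) + H' {n - 1} - H' (range n)) := by
      have hn1 : n - 1 + 1 = n := by omega
      rw [hn1]
      have e1 : Finset.Ico n (n + 1) = {n} := by
        ext k; simp [Finset.mem_Ico]; try omega
      have e2 : Finset.Ico (n - 1) (n + 1) = insert n {n - 1} := by
        ext k; simp [Finset.mem_Ico, Finset.mem_insert]; omega
      have e4 : range (n + 1) \ {n - 1} = insert n (range (n - 1)) := by
        ext k; simp [Finset.mem_sdiff, Finset.mem_range, Finset.mem_insert]; omega
      rw [e1, e2, e4]
      have hterm : ∀ i ∈ range (n - 1),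
          H (insert i {n}) + H (insert n {n - 1}) - H (insert i (insert n {n - 1})) - H {n}
          = H' {i} + H' {n - 1} - H' (insert i {n - 1}) := by
        intro i hi
        rw [hH']; simp only
        rw [Finset.pair_comm i n, Finset.insert_comm n i ({n-1} : Finset ℕ)]
        ring
      rw [Finset.sum_congr rfl hterm]
      congr 1
      rw [hH']; simp only [ins_range]
      ring
    have claim2 : ∀ j ∈ Finset.Ico 2 (n - 1),
        ((∑ i ∈ range j, (H (insert i (Finset.Ico (j + 1) (n + 1))) + H (Finset.Ico j (n + 1))
            - H (insert i (Finset.Ico j (n + 1))) - H (Finset.Ico (j + 1) (n + 1))))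
          - (H (range (n + 1) \ {j}) + H (Finset.Ico j (n + 1))
            - H (range (n + 1)) - H (Finset.Ico (j + 1) (n + 1))))
        = ((∑ i ∈ range j, (H' (insert i (Finset.Ico (j + 1) n)) + H' (Finset.Ico j n)
            - H' (insert i (Finset.Ico j n)) - H' (Finset.Ico (j + 1) n)))
          - (H' (range n \ {j}) + H' (Finset.Ico j n) - H' (range n) - H' (Finset.Ico (j + 1) n))) := by
      intro j hj
      rw [Finset.mem_Ico] at hj
      have f1 : Finset.Ico j (n + 1) = insert n (Finset.Ico j n) := by
        ext k; simp [Finset.mem_Ico, Finset.mem_insert]; omega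
      have f2 : Finset.Ico (j + 1) (n + 1) = insert n (Finset.Ico (j + 1) n) := by
        ext k; simp [Finset.mem_Ico, Finset.mem_insert]; omega
      have f3 : ∀ i, insert i (Finset.Ico (j + 1) (n + 1))
          = insert n (insert i (Finset.Ico (j + 1) n)) := by
        intro i; ext k; simp [Finset.mem_Ico, Finset.mem_insert]; omega
      have f4 : ∀ i, insert i (Finset.Ico j (n + 1))
          = insert n (insert i (Finset.Ico j n)) := by
        intro i; ext k; simp [Finset.mem_Ico, Finset.mem_insert]; omega
      have perI : ∀ i ∈ range j,
          H (insert i (Finset.Ico (j + 1) (n + 1))) + H (Finset.Ico j (n + 1))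
            - H (insert i (Finset.Ico j (n + 1))) - H (Finset.Ico (j + 1) (n + 1))
          = H' (insert i (Finset.Ico (j + 1) n)) + H' (Finset.Ico j n)
            - H' (insert i (Finset.Ico j n)) - H' (Finset.Ico (j + 1) n) := by
        intro i _
        rw [hH']; simp only
        rw [f3 i, f4 i, f2, f1]
        ring
      rw [Finset.sum_congr rfl perI]
      congr 1
      rw [hH']; simp only
      rw [f1, f2, ← ins_sd j (by omega), ← ins_range]
      try ring
    rw [Finset.sum_congr rfl claim2, claim1]
    try ring

end HOI

open HOI

/-- O-information as a sum of (conditional) RSIs. -/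
theorem oinfo_eq_sum_rsi {Ω : Type} [Fintype Ω] {n : ℕ} {α : Fin n → Type}
    [∀ i, Fintype (α i)] (hn : 3 ≤ n)
    (p : Ω → ℝ) (hp : ∀ ω, 0 ≤ p ω) (hp1 : ∑ ω, p ω = 1)
    (X : ∀ i, Ω → α i) :
    Oinfo p X =
      ((∑ i ∈ Finset.Iio (⟨n - 1, by omega⟩ : Fin n), mi p (X i) (X ⟨n - 1, by omega⟩))
        - mi p (subvec X (Finset.Iio (⟨n - 1, by omega⟩ : Fin n))) (X ⟨n - 1, by omega⟩))
      + ∑ j ∈ Finset.univ.filter (fun j : Fin n => 2 ≤ j.val ∧ j.val ≤ n - 2),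
          ((∑ i ∈ Finset.Iio j, cmi p (X i) (X j) (subvec X (Finset.Ioi j)))
            - cmi p (subvec X (Finset.Iio j)) (X j) (subvec X (Finset.Ioi j))) := by
  classical
  have hnn : n - 1 < n := by omega
  set G : Finset ℕ → ℝ :=
    fun S => vecH p X (Finset.univ.filter (fun i : Fin n => (i : ℕ) ∈ S)) with hG
  have hGuniv : G (Finset.range n) = vecH p X Finset.univ := by
    simp only [hG]; congr 1; ext k
    simp [Finset.mem_filter, Finset.mem_range, k.isLt]
  have hGsingle : ∀ j : Fin n, G {(j : ℕ)} = vecH p X {j} := by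
    intro j; simp only [hG]; congr 1; ext k
    simp [Finset.mem_filter, Fin.ext_iff]
  have hGpair : ∀ i j : Fin n, G (insert (i : ℕ) {(j : ℕ)}) = vecH p X (insert i {j}) := by
    intro i j; simp only [hG]; congr 1; ext k
    simp [Finset.mem_filter, Finset.mem_insert, Fin.ext_iff]
  have hGsd : ∀ j : Fin n, G (Finset.range n \ {(j : ℕ)}) = vecH p X (Finset.univ \ {j}) := by
    intro j; simp only [hG]; congr 1; ext k
    simp [Finset.mem_filter, Finset.mem_sdiff, Finset.mem_range, Fin.ext_iff, k.isLt]
  have hGIio : ∀ j : Fin n, G (Finset.range (j : ℕ)) = vecH p X (Finset.Iio j) := by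
    intro j; simp only [hG]; congr 1; ext k
    simp only [Finset.mem_filter, Finset.mem_range, Finset.mem_Iio, Finset.mem_univ,
      true_and, Fin.lt_def]
  have hGIoi : ∀ j : Fin n, G (Finset.Ico ((j : ℕ) + 1) n) = vecH p X (Finset.Ioi j) := by
    intro j; simp only [hG]; congr 1; ext k
    simp only [Finset.mem_filter, Finset.mem_Ico, Finset.mem_Ioi, Finset.mem_univ,
      true_and, Fin.lt_def]
    have := k.isLt; omega
  have hGIci : ∀ j : Fin n, G (Finset.Ico (j : ℕ) n) = vecH p X (insert j (Finset.Ioi j)) := by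
    intro j; simp only [hG]; congr 1; ext k
    simp only [Finset.mem_filter, Finset.mem_Ico, Finset.mem_insert, Finset.mem_Ioi,
      Finset.mem_univ, true_and, Fin.lt_def, Fin.ext_iff]
    have := k.isLt; omega
  have hGinsIoi : ∀ i j : Fin n, G (insert (i : ℕ) (Finset.Ico ((j : ℕ) + 1) n))
      = vecH p X (insert i (Finset.Ioi j)) := by
    intro i j; simp only [hG]; congr 1; ext k
    simp only [Finset.mem_filter, Finset.mem_insert, Finset.mem_Ico, Finset.mem_Ioi,
      Finset.mem_univ, true_and, Fin.lt_def, Fin.ext_iff]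
    have := k.isLt; omega
  have hGinsIci : ∀ i j : Fin n, G (insert (i : ℕ) (Finset.Ico (j : ℕ) n))
      = vecH p X (insert i (insert j (Finset.Ioi j))) := by
    intro i j; simp only [hG]; congr 1; ext k
    simp only [Finset.mem_filter, Finset.mem_insert, Finset.mem_Ico, Finset.mem_Ioi,
      Finset.mem_univ, true_and, Fin.lt_def, Fin.ext_iff]
    have := k.isLt; omega
  have h0 : G ∅ = 0 := by
    simp only [hG]
    have he : (Finset.univ.filter (fun i : Fin n => (i : ℕ) ∈ (∅ : Finset ℕ))) = ∅ := by
      simp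
    rw [he]
    exact vecH_empty p hp1 X
  have key := key' n hn G h0
  have sum_val : ∀ (s : Finset (Fin n)) (g : ℕ → ℝ),
      ∑ k ∈ s.image Fin.val, g k = ∑ i ∈ s, g (i : ℕ) := by
    intro s g
    apply Finset.sum_image
    intro a _ b _ h
    exact Fin.val_injective h
  have im2 : ∀ j : Fin n, (Finset.Iio j).image Fin.val = Finset.range (j : ℕ) := by
    intro j; ext k
    simp only [Finset.mem_image, Finset.mem_Iio, Finset.mem_range]
    constructor
    · rintro ⟨i, hi, rfl⟩; exact hi
    · intro hk
      exact ⟨⟨k, by omega⟩, by exact hk, rfl⟩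
  have im1 : (Finset.Iio (⟨n - 1, hnn⟩ : Fin n)).image Fin.val = Finset.range (n - 1) :=
    im2 ⟨n - 1, hnn⟩
  have im3 : (Finset.univ.filter (fun j : Fin n => 2 ≤ j.val ∧ j.val ≤ n - 2)).image Fin.val
      = Finset.Ico 2 (n - 1) := by
    ext k
    simp only [Finset.mem_image, Finset.mem_filter, Finset.mem_univ, true_and, Finset.mem_Ico]
    constructor
    · rintro ⟨i, ⟨h2, h3⟩, rfl⟩
      have := i.isLt; omega
    · rintro ⟨h2, h3⟩
      refine ⟨⟨k, by omega⟩, ⟨h2, ?_⟩, rfl⟩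
      show k ≤ n - 2
      omega
  have insL : insert (⟨n - 1, hnn⟩ : Fin n) (Finset.Iio (⟨n - 1, hnn⟩ : Fin n))
      = Finset.univ := by
    ext k
    simp only [Finset.mem_insert, Finset.mem_Iio, Finset.mem_univ, iff_true, Fin.ext_iff,
      Fin.lt_def]
    have := k.isLt; omega
  have hu1 : ∀ j : Fin n, Finset.Iio j ∪ Finset.Ioi j = Finset.univ \ {j} := by
    intro j; ext k
    simp only [Finset.mem_union, Finset.mem_Iio, Finset.mem_Ioi, Finset.mem_sdiff,
      Finset.mem_univ, true_and, Finset.mem_singleton, Fin.lt_def, Fin.ext_iff]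
    omega
  have hu2 : ∀ j : Fin n, insert j (Finset.univ \ {j}) = Finset.univ := by
    intro j; ext k
    simp only [Finset.mem_insert, Finset.mem_sdiff, Finset.mem_univ, iff_true,
      Finset.mem_singleton]
    tauto
  have E1 : Oinfo p X
      = ((n : ℝ) - 2) * G (Finset.range n)
        + ∑ j ∈ Finset.range n, (G {j} - G (Finset.range n \ {j})) := by
    rw [Oinfo, ent_full_eq_vecH, ← hGuniv]
    congr 1
    rw [← Fin.sum_univ_eq_sum_range (fun k => G {k} - G (Finset.range n \ {k})) n]
    apply Finset.sum_congr rfl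
    intro j _
    rw [ent_single_eq_vecH, ← hGsingle j, ← hGsd j]
  rw [E1, key]
  congr 1
  · congr 1
    · rw [← im1, sum_val]
      apply Finset.sum_congr rfl
      intro i hi
      rw [mi_eq_vecH p X i ⟨n - 1, hnn⟩, ← hGsingle i, ← hGsingle ⟨n - 1, hnn⟩,
        ← hGpair i ⟨n - 1, hnn⟩]
    · rw [mi_sub_eq_vecH p X (Finset.Iio (⟨n - 1, hnn⟩ : Fin n)) ⟨n - 1, hnn⟩, insL,
        ← hGIio ⟨n - 1, hnn⟩, ← hGsingle ⟨n - 1, hnn⟩, ← hGuniv]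
  · rw [← im3, sum_val]
    apply Finset.sum_congr rfl
    intro j hj
    congr 1
    · rw [← im2 j, sum_val]
      apply Finset.sum_congr rfl
      intro i hi
      rw [cmi_eq_vecH p X i j (Finset.Ioi j), ← hGinsIoi i j, ← hGIci j, ← hGinsIci i j,
        ← hGIoi j]
    · rw [cmi_sub_eq_vecH p X (Finset.Iio j) j (Finset.Ioi j), hu1 j, hu2 j, ← hGsd j,
        ← hGIci j, ← hGuniv, ← hGIoi j]
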